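/- arXiv:1303.2785 — 3 statements merged into one kernel-verified Lean document; each statement's English description precedes it below -/
import Mathlib

section
/- Let σ_r be the Banks–Levy–Sepanski 2-cocycle on GL_r(F) (with twisting parameter c). For any g ∈ GL_r(F) and a ∈ F^×: σ_r(g, aI_r) σ_r(aI_r, g)^{-1} = (det(g), a^{r-1+2cr})_F, where (−,−)_F is the n-th order Hilbert symbol. -/
/-!
For the central element `z = aI`, the map `β(m) = σ(m, z) / σ(z, m)` is a homomorphism on
`GLᵣ(F)` by the cocycle identity, so it suffices to compute it on generators. It is trivial on
unipotent upper triangular matrices by their invariance property, hence on all transvections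
(a lower one is conjugate to an upper one by a permutation matrix and `μ` is commutative). On the
torus the explicit formula gives `β(t) = (det t, a)^(r-1) (det t, a^r)^(2c)`, the factor
`r - 1` counting, for each `i`, the indices `j ≠ i`. Since `GLᵣ(F)` is generated by transvections
and invertible diagonal matrices, `β = (det ·, a^(r-1+2cr))`.
-/

open Matrix Finset

theorem prod_ite_lt_mul_prod_ite_lt_eq_pow {ι M : Type*} [Fintype ι] [LinearOrder ι]
    [CommMonoid M] (f : ι → M) :
    (∏ i, ∏ j, if i < j then f i else 1) * (∏ i, ∏ j, if i < j then f j else 1) =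
      (∏ i, f i) ^ (Fintype.card ι - 1) := by
  rw [Finset.prod_comm (f := fun i j => if i < j then f j else 1), ← prod_mul_distrib,
    ← prod_pow]
  refine prod_congr rfl fun i _ => ?_
  rw [← prod_mul_distrib]
  calc ∏ j, ((if i < j then f i else 1) * if j < i then f i else 1)
      = ∏ j ∈ univ.erase i, f i := by
        rw [← filter_ne', prod_filter]
        refine prod_congr rfl fun j _ => ?_
        rcases lt_trichotomy i j with hij | rfl | hji
        · simp [hij, hij.ne', hij.not_gt]
        · simp
        · simp [hji, hji.ne, hji.not_gt]
    _ = f i ^ (Fintype.card ι - 1) := by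
        rw [prod_const, card_erase_of_mem (mem_univ i), card_univ]

theorem Matrix.swap_mul_transvection {n R : Type*} [Fintype n] [DecidableEq n] [CommRing R]
    (i j : n) (c : R) :
    swap R i j * transvection j i c = transvection i j c * swap R i j := by
  ext k l
  simp only [swap, Equiv.Perm.permMatrix, PEquiv.toMatrix_toPEquiv_mul,
    PEquiv.mul_toMatrix_toPEquiv, submatrix_apply, id, transvection, add_apply, one_apply,
    single_apply, Equiv.symm_swap, Equiv.swap_apply_eq_iff]
  grind [Equiv.swap_apply_eq_iff]

theorem Matrix.isUnit_transvection {n R : Type*} [Fintype n] [DecidableEq n] [CommRing R]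
    {i j : n} (hij : i ≠ j) (c : R) : IsUnit (transvection i j c) :=
  (isUnit_iff_isUnit_det _).2 (det_transvection_of_ne i j hij c ▸ isUnit_one)

theorem Matrix.transvection_apply_of_le {n R : Type*} [LinearOrder n] [CommRing R]
    {i j : n} (hij : i < j) (c : R) {k l : n} (hlk : l ≤ k) :
    transvection i j c k l = if k = l then 1 else 0 := by
  have : ¬(i = k ∧ j = l) := by rintro ⟨rfl, rfl⟩; exact hlk.not_gt hij
  simp [transvection, one_apply, this]

theorem Matrix.TransvectionStruct.map_toMatrix_eq_one_of_upper {n R μ : Type*} [Fintype n] [LinearOrder n]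
    [CommRing R] [CommGroup μ] {β : Matrix n n R → μ}
    (hmul : ∀ A B, IsUnit A → IsUnit B → β (A * B) = β A * β B)
    (hupper : ∀ (i j : n) (c : R), i < j → β (transvection i j c) = 1)
    (t : TransvectionStruct n R) : β t.toMatrix = 1 := by
  obtain ⟨i, j, hij, c⟩ := t
  rcases hij.lt_or_gt with hlt | hgt
  · exact hupper i j c hlt
  · have hswap : IsUnit (swap R i j) := ⟨⟨_, _, swap_mul_self i j, swap_mul_self i j⟩, rfl⟩
    have := congrArg β (swap_mul_transvection i j c)
    rwa [hmul _ _ hswap (isUnit_transvection hgt.ne c), hupper j i c hgt, mul_one,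
      hmul _ _ (isUnit_transvection hij c) hswap, right_eq_mul] at this

theorem Matrix.eq_comp_det_of_diagonal_transvection {n 𝕜 μ : Type*} [Fintype n] [DecidableEq n]
    [Field 𝕜] [CommMonoid μ] {β : Matrix n n 𝕜 → μ} (χ : 𝕜ˣ →* μ)
    (hmul : ∀ A B, IsUnit A → IsUnit B → β (A * B) = β A * β B)
    (htransvection : ∀ t : TransvectionStruct n 𝕜, β t.toMatrix = 1)
    (hdiagonal : ∀ t : n → 𝕜ˣ, β (diagonal fun i => (t i : 𝕜)) = χ (∏ i, t i))
    (g : (Matrix n n 𝕜)ˣ) :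
    β g = χ (Units.map detMonoidHom g) := by
  suffices ∃ u : 𝕜ˣ, (u : 𝕜) = det (g : Matrix n n 𝕜) ∧ β g = χ u by
    obtain ⟨u, hu, hβ⟩ := this
    rwa [show Units.map detMonoidHom g = u from Units.ext hu.symm]
  refine diagonal_transvection_induction_of_det_ne_zero
    (fun M => ∃ u : 𝕜ˣ, (u : 𝕜) = det M ∧ β M = χ u) _
    ((isUnit_iff_isUnit_det _).1 g.isUnit).ne_zero ?_ ?_ ?_
  · intro D hD
    rw [det_diagonal, prod_ne_zero_iff] at hD
    let t i := Units.mk0 (D i) (hD i (mem_univ i))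
    exact ⟨∏ i, t i, by simp [t, det_diagonal], hdiagonal t⟩
  · exact fun t => ⟨1, t.det.symm, by rw [htransvection, map_one]⟩
  · rintro A B hA hB ⟨u, hu, hβA⟩ ⟨v, hv, hβB⟩
    refine ⟨u * v, by rw [det_mul, Units.val_mul, hu, hv], ?_⟩
    rw [hmul A B ((isUnit_iff_isUnit_det A).2 (isUnit_iff_ne_zero.2 hA))
      ((isUnit_iff_isUnit_det B).2 (isUnit_iff_ne_zero.2 hB)), hβA, hβB, map_mul]

def cocycleCommutator {M μ : Type*} [Div μ] (σ : M → M → μ) (z m : M) : μ := σ m z / σ z m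

section Cocycle

variable {M μ : Type*} [Monoid M] [CommGroup μ] {σ : M → M → μ}

theorem cocycleCommutator_mul
    (hσ : ∀ g g' g'' : M, IsUnit g → IsUnit g' → IsUnit g'' →
      σ g g' * σ (g * g') g'' = σ g (g' * g'') * σ g' g'')
    {z : M} (hz : IsUnit z) (hzc : ∀ m, Commute z m) (m m' : M) (hm : IsUnit m)
    (hm' : IsUnit m') :
    cocycleCommutator σ z (m * m') = cocycleCommutator σ z m * cocycleCommutator σ z m' := by
  have e₁ := hσ m m' z hm hm' hz
  have e₂ := hσ m z m' hm hz hm'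
  have e₃ := hσ z m m' hz hm hm'
  rw [(hzc m').eq] at e₂
  rw [(hzc m).eq] at e₃
  unfold cocycleCommutator
  rw [div_mul_div_comm, div_eq_div_iff_mul_eq_mul]
  refine mul_right_cancel (b := σ m m' * σ (m * z) m') ?_
  calc σ (m * m') z * (σ z m * σ z m') * (σ m m' * σ (m * z) m')
      = σ m m' * σ (m * m') z * σ z m' * (σ z m * σ (m * z) m') := by ac_rfl
    _ = σ z m' * σ m (m' * z) * σ m' z * (σ z (m * m') * σ m m') := by rw [e₁, e₃]; ac_rfl
    _ = σ m z * σ (m * z) m' * σ m' z * (σ z (m * m') * σ m m') := by rw [e₂]; ac_rfl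
    _ = σ m z * σ m' z * σ z (m * m') * (σ m m' * σ (m * z) m') := by ac_rfl

theorem cocycleCommutator_eq_of_invariant {P : M → Prop}
    (hσ : ∀ n g g' n' : M, P n → P n' → IsUnit g → IsUnit g' →
      σ (n * g) (g' * n') = σ g g')
    (hone : P 1) {z : M} (hz : IsUnit z) {u : M} (hu : P u) :
    cocycleCommutator σ z u = cocycleCommutator σ z 1 := by
  have hleft := hσ u 1 z 1 hu hone isUnit_one hz
  have hright := hσ 1 z 1 u hone hu hz isUnit_one
  simp only [mul_one, one_mul] at hleft hright
  rw [cocycleCommutator, cocycleCommutator, hleft, hright]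

end Cocycle

theorem cocycleCommutator_diagonal {F μ : Type*} [Field F] [CommGroup μ] {r : ℕ}
    {h : Fˣ → Fˣ → μ}
    (hmul_left : ∀ a b d : Fˣ, h (a * b) d = h a d * h b d)
    (hmul_right : ∀ a b d : Fˣ, h a (b * d) = h a b * h a d)
    (hinv : ∀ a b : Fˣ, (h a b)⁻¹ = h b a) {c : ℕ}
    {σ : Matrix (Fin r) (Fin r) F → Matrix (Fin r) (Fin r) F → μ}
    (htorus : ∀ t t' : Fin r → Fˣ,
      σ (diagonal fun i => (t i : F)) (diagonal fun i => (t' i : F)) =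
        (∏ i, ∏ j, if i < j then h (t i) (t' j) else 1) * h (∏ i, t i) (∏ i, t' i) ^ c)
    (a : Fˣ) (t : Fin r → Fˣ) :
    cocycleCommutator σ (diagonal fun _ => (a : F)) (diagonal fun i => (t i : F)) =
      h (∏ i, t i) (a ^ (r - 1 + 2 * c * r)) := by
  have hχ : ∏ i, h (t i) a = h (∏ i, t i) a :=
    (map_prod (MonoidHom.mk' (h · a) fun x y => hmul_left x y a) t univ).symm
  have hψ : ∀ n : ℕ, h (∏ i, t i) (a ^ n) = h (∏ i, t i) a ^ n :=
    map_pow (MonoidHom.mk' (h (∏ i, t i)) (hmul_right _)) a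
  rw [cocycleCommutator, htorus, htorus, prod_const, card_univ, Fintype.card_fin,
    div_eq_mul_inv, mul_inv, ← prod_inv_distrib]
  simp only [← prod_inv_distrib, apply_ite (·⁻¹), inv_one, hinv]
  rw [← inv_pow, hinv, mul_mul_mul_comm, prod_ite_lt_mul_prod_ite_lt_eq_pow,
    Fintype.card_fin, hχ, hψ, hψ, ← pow_mul, ← pow_add, ← pow_add]
  congr 1
  ring

theorem bls_cocycle_scalar_commutator_general
    {F : Type*} [Field F] {μ : Type*} [CommGroup μ]
    (r : ℕ) (c : ℕ)
    -- the n-th order Hilbert symbol and its standard properties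
    (h : Fˣ → Fˣ → μ)
    (hmul_left : ∀ a b d : Fˣ, h (a * b) d = h a d * h b d)
    (hmul_right : ∀ a b d : Fˣ, h a (b * d) = h a b * h a d)
    (hinv : ∀ a b : Fˣ, (h a b)⁻¹ = h b a)
    -- the cocycle
    (σ : Matrix (Fin r) (Fin r) F → Matrix (Fin r) (Fin r) F → μ)
    -- 2-cocycle identity
    (hcocycle : ∀ g g' g'' : Matrix (Fin r) (Fin r) F,
      IsUnit g → IsUnit g' → IsUnit g'' →
      σ g g' * σ (g * g') g'' = σ g (g' * g'') * σ g' g'')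
    -- upper triangular unipotent matrices
    (unip : Matrix (Fin r) (Fin r) F → Prop)
    (hunip_def : ∀ u, unip u ↔ ∀ i j : Fin r, j ≤ i → u i j = if i = j then 1 else 0)
    -- property (1): σ(ng, g'n') = σ(g, g')
    (hprop1 : ∀ n g g' n' : Matrix (Fin r) (Fin r) F, unip n → unip n' →
      IsUnit g → IsUnit g' → σ (n * g) (g' * n') = σ g g')
    -- property (4): torus formula
    (hprop4 : ∀ t t' : Fin r → Fˣ,
      σ (Matrix.diagonal fun i => (t i : F)) (Matrix.diagonal fun i => (t' i : F)) =
        (∏ i : Fin r, ∏ j : Fin r, if i < j then h (t i) (t' j) else 1) *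
          h (∏ i, t i) (∏ i, t' i) ^ c) :
    ∀ (g : (Matrix (Fin r) (Fin r) F)ˣ) (a : Fˣ),
      σ (g : Matrix (Fin r) (Fin r) F) (Matrix.diagonal fun _ => (a : F)) *
          (σ (Matrix.diagonal fun _ => (a : F)) (g : Matrix (Fin r) (Fin r) F))⁻¹ =
        h (Units.map (Matrix.detMonoidHom : Matrix (Fin r) (Fin r) F →* F) g)
          (a ^ (r - 1 + 2 * c * r)) := by
  intro g a
  let χ : Fˣ →* μ := MonoidHom.mk' (h · (a ^ (r - 1 + 2 * c * r))) fun x y => hmul_left x y _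
  have hZ : IsUnit (diagonal fun _ : Fin r => (a : F)) :=
    isUnit_diagonal.2 (Pi.isUnit_iff.2 fun _ => a.isUnit)
  have hZc : ∀ m, Commute (diagonal fun _ : Fin r => (a : F)) m := fun m => by
    simpa only [scalar_apply] using scalar_commute (a : F) (Commute.all _) m
  have hmul := cocycleCommutator_mul hcocycle hZ hZc
  have hdiag := cocycleCommutator_diagonal hmul_left hmul_right hinv hprop4 a
  have hunip : ∀ u, unip u → cocycleCommutator σ (diagonal fun _ => (a : F)) u = 1 := by
    have hone : unip 1 := (hunip_def 1).2 fun _ _ _ => one_apply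
    have h1 := hdiag 1
    simp only [Pi.one_apply, Units.val_one, diagonal_one, prod_const_one] at h1
    intro u hu
    rw [cocycleCommutator_eq_of_invariant hprop1 hone hZ hu, h1]
    exact map_one χ
  have htrans := TransvectionStruct.map_toMatrix_eq_one_of_upper hmul
    fun i j x hij => hunip _ ((hunip_def _).2 fun _ _ hlk => transvection_apply_of_le hij x hlk)
  rw [← div_eq_mul_inv]
  exact eq_comp_det_of_diagonal_transvection χ hmul htrans hdiag g

/-- Let `σ` be the Banks–Levy–Sepanski 2-cocycle on `GL_r(F)` with twisting parameter `c`
(characterized by the listed properties: the 2-cocycle identity, invariance under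
unipotent translations, the torus formula involving the `n`-th order Hilbert symbol `h`,
the formulas for the Weyl representatives `𝔐`, together with the Bruhat decomposition).
Then for any invertible `g` and any `a ∈ F^×`:
`σ(g, aI_r) σ(aI_r, g)⁻¹ = (det g, a^{r-1+2cr})_F`. -/
theorem bls_cocycle_scalar_commutator
    {F : Type*} [Field F] {μ : Type*} [CommGroup μ]
    (r : ℕ) (hr : 1 ≤ r) (c : ℕ)
    -- the n-th order Hilbert symbol and its standard properties
    (h : Fˣ → Fˣ → μ)
    (hmul_left : ∀ a b d : Fˣ, h (a * b) d = h a d * h b d)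
    (hmul_right : ∀ a b d : Fˣ, h a (b * d) = h a b * h a d)
    (hinv : ∀ a b : Fˣ, (h a b)⁻¹ = h b a)
    (hneg : ∀ a : Fˣ, h a (-a) = 1)
    -- the cocycle
    (σ : Matrix (Fin r) (Fin r) F → Matrix (Fin r) (Fin r) F → μ)
    -- 2-cocycle identity
    (hcocycle : ∀ g g' g'' : Matrix (Fin r) (Fin r) F,
      IsUnit g → IsUnit g' → IsUnit g'' →
      σ g g' * σ (g * g') g'' = σ g (g' * g'') * σ g' g'')
    -- upper triangular unipotent matrices
    (unip : Matrix (Fin r) (Fin r) F → Prop)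
    (hunip_def : ∀ u, unip u ↔ ∀ i j : Fin r, j ≤ i → u i j = if i = j then 1 else 0)
    -- property (1): σ(ng, g'n') = σ(g, g')
    (hprop1 : ∀ n g g' n' : Matrix (Fin r) (Fin r) F, unip n → unip n' →
      IsUnit g → IsUnit g' → σ (n * g) (g' * n') = σ g g')
    -- property (2): σ(gn, g') = σ(g, ng')
    (hprop2 : ∀ g n g' : Matrix (Fin r) (Fin r) F, unip n →
      IsUnit g → IsUnit g' → σ (g * n) g' = σ g (n * g'))
    -- property (4): torus formula
    (hprop4 : ∀ t t' : Fin r → Fˣ,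
      σ (Matrix.diagonal fun i => (t i : F)) (Matrix.diagonal fun i => (t' i : F)) =
        (∏ i : Fin r, ∏ j : Fin r, if i < j then h (t i) (t' j) else 1) *
          h (∏ i, t i) (∏ i, t' i) ^ c)
    -- the set 𝔐 of Weyl group representatives
    (MM : Set (Matrix (Fin r) (Fin r) F))
    (hMMunit : ∀ η ∈ MM, IsUnit η)
    -- property (3): σ(η, t) is a product of symbols h(-t_j, t_i)
    (hprop3 : ∀ η ∈ MM, ∀ t : Fin r → Fˣ, ∃ S : Finset (Fin r × Fin r),
      σ η (Matrix.diagonal fun i => (t i : F)) = ∏ p ∈ S, h (-(t p.2)) (t p.1))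
    -- property (5): σ(t, η) = 1
    (hprop5 : ∀ η ∈ MM, ∀ t : Fin r → Fˣ,
      σ (Matrix.diagonal fun i => (t i : F)) η = 1)
    -- Bruhat decomposition
    (hbruhat : ∀ g : Matrix (Fin r) (Fin r) F, IsUnit g →
      ∃ (n n' : Matrix (Fin r) (Fin r) F) (t : Fin r → Fˣ)
        (η : Matrix (Fin r) (Fin r) F), unip n ∧ unip n' ∧ η ∈ MM ∧
          g = n * (Matrix.diagonal fun i => (t i : F)) * η * n') :
    ∀ (g : (Matrix (Fin r) (Fin r) F)ˣ) (a : Fˣ),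
      σ (g : Matrix (Fin r) (Fin r) F) (Matrix.diagonal fun _ => (a : F)) *
          (σ (Matrix.diagonal fun _ => (a : F)) (g : Matrix (Fin r) (Fin r) F))⁻¹ =
        h (Units.map (Matrix.detMonoidHom : Matrix (Fin r) (Fin r) F →* F) g)
          (a ^ (r - 1 + 2 * c * r)) :=
  bls_cocycle_scalar_commutator_general r c h hmul_left hmul_right hinv σ hcocycle unip hunip_def
    hprop1 hprop4
end

section
/- Using the formula σ_r(g, aI_r)σ_r(aI_r, g)^{-1} = (det g, a^{r-1+2cr})_F, the center of the metaplectic n-fold cover of GL_r(F) is Z = {(aI_r, ξ) : a^{r-1+2cr} ∈ F^{×n}, ξ ∈ μ_n}; equivalently, Z = {(aI_r, ξ) : a ∈ F^{×(n/d)}, ξ ∈ μ_n} where d = gcd(r-1+2c, n). -/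
/-- Using the commutator formula `σ(g, aI_r) σ(aI_r, g)⁻¹ = (det g, a^{r-1+2cr})_F` for
the BLS cocycle `σ` defining the `n`-fold metaplectic cover
`GL~_r(F) = GL_r(F) × μ_n`, together with the nondegeneracy of the `n`-th order Hilbert
symbol on `F^×/F^{×n}`, the center of the metaplectic cover is
`Z = {(aI_r, ξ) : a^{r-1+2cr} ∈ F^{×n}, ξ ∈ μ_n}`; equivalently (by the structure of
`F^×` for a local field) `Z = {(aI_r, ξ) : a ∈ F^{×(n/d)}, ξ ∈ μ_n}` where
`d = gcd(r-1+2c, n)`.  An element `(g, ξ)` is central iff `g` commutes with every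
invertible matrix and `σ(g, g') = σ(g', g)` for all invertible `g'` (the `μ_n`-component
being automatically central). -/
theorem metaplectic_center
    {F : Type*} [Field F] {μ : Type*} [CommGroup μ]
    (n : ℕ) (hn : 2 ≤ n) (r : ℕ) (hr : 1 ≤ r) (c : ℕ)
    (h : Fˣ → Fˣ → μ)
    (σ : Matrix (Fin r) (Fin r) F → Matrix (Fin r) (Fin r) F → μ)
    -- the commutator formula for the BLS cocycle
    (hcomm : ∀ (g : (Matrix (Fin r) (Fin r) F)ˣ) (a : Fˣ),
      σ (g : Matrix (Fin r) (Fin r) F) (Matrix.diagonal fun _ => (a : F)) *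
          (σ (Matrix.diagonal fun _ => (a : F)) (g : Matrix (Fin r) (Fin r) F))⁻¹ =
        h (Units.map (Matrix.detMonoidHom : Matrix (Fin r) (Fin r) F →* F) g)
          (a ^ (r - 1 + 2 * c * r)))
    -- nondegeneracy of the Hilbert symbol on F^×/F^{×n}
    (hnondeg : ∀ b : Fˣ, (∀ x : Fˣ, h x b = 1) ↔ ∃ y : Fˣ, b = y ^ n)
    -- surjectivity of the determinant GL_r(F) → F^×
    (hdet_surj : ∀ x : Fˣ, ∃ g : (Matrix (Fin r) (Fin r) F)ˣ,
      Units.map (Matrix.detMonoidHom : Matrix (Fin r) (Fin r) F →* F) g = x)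
    -- structure of F^×/F^{×n} for a local field (Gao–Oliver's lemma)
    (hGO : ∀ a : Fˣ, (∃ b : Fˣ, a ^ (r - 1 + 2 * c * r) = b ^ n) ↔
      ∃ b : Fˣ, a = b ^ (n / Nat.gcd (r - 1 + 2 * c) n)) :
    ∀ g : (Matrix (Fin r) (Fin r) F)ˣ,
      ((∀ g' : (Matrix (Fin r) (Fin r) F)ˣ, g * g' = g' * g ∧
          σ (g : Matrix (Fin r) (Fin r) F) (g' : Matrix (Fin r) (Fin r) F) =
            σ (g' : Matrix (Fin r) (Fin r) F) (g : Matrix (Fin r) (Fin r) F)) ↔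
        ∃ a : Fˣ, (g : Matrix (Fin r) (Fin r) F) = (Matrix.diagonal fun _ => (a : F)) ∧
          ∃ b : Fˣ, a ^ (r - 1 + 2 * c * r) = b ^ n) ∧
      ((∀ g' : (Matrix (Fin r) (Fin r) F)ˣ, g * g' = g' * g ∧
          σ (g : Matrix (Fin r) (Fin r) F) (g' : Matrix (Fin r) (Fin r) F) =
            σ (g' : Matrix (Fin r) (Fin r) F) (g : Matrix (Fin r) (Fin r) F)) ↔
        ∃ a : Fˣ, (g : Matrix (Fin r) (Fin r) F) = (Matrix.diagonal fun _ => (a : F)) ∧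
          ∃ b : Fˣ, a = b ^ (n / Nat.gcd (r - 1 + 2 * c) n)) := by
  intro g
  have key : (∀ g' : (Matrix (Fin r) (Fin r) F)ˣ, g * g' = g' * g ∧
          σ (g : Matrix (Fin r) (Fin r) F) (g' : Matrix (Fin r) (Fin r) F) =
            σ (g' : Matrix (Fin r) (Fin r) F) (g : Matrix (Fin r) (Fin r) F)) ↔
        ∃ a : Fˣ, (g : Matrix (Fin r) (Fin r) F) = (Matrix.diagonal fun _ => (a : F)) ∧
          ∃ b : Fˣ, a ^ (r - 1 + 2 * c * r) = b ^ n := by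
    constructor
    · intro hyp
      -- g commutes with all transvections, hence is scalar
      have hsc : (g : Matrix (Fin r) (Fin r) F) ∈ Set.range (Matrix.scalar (Fin r)) := by
        apply Matrix.mem_range_scalar_of_commute_transvectionStruct
        intro t
        have hu : ∃ u : (Matrix (Fin r) (Fin r) F)ˣ,
            (u : Matrix (Fin r) (Fin r) F) = t.toMatrix :=
          ⟨⟨t.toMatrix, t.inv.toMatrix, t.mul_inv, t.inv_mul⟩, rfl⟩
        obtain ⟨u, hu⟩ := hu
        have := (hyp u).1
        have h2 : (g : Matrix (Fin r) (Fin r) F) * u = u * g := by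
          exact_mod_cast congrArg (Units.val) this
        rw [hu] at h2
        exact h2.symm
      obtain ⟨a0, ha0⟩ := hsc
      have hdet : IsUnit ((g : Matrix (Fin r) (Fin r) F).det) :=
        (Matrix.isUnit_iff_isUnit_det _).mp g.isUnit
      rw [← ha0, Matrix.scalar_apply, Matrix.det_diagonal] at hdet
      simp only [Finset.prod_const, Finset.card_univ, Fintype.card_fin] at hdet
      have ha0u : IsUnit a0 := (isUnit_pow_iff (by omega : r ≠ 0)).mp hdet
      refine ⟨ha0u.unit, ?_, ?_⟩
      · rw [← ha0, Matrix.scalar_apply, ha0u.unit_spec]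
      · rw [← hnondeg]
        intro x
        obtain ⟨g', hg'⟩ := hdet_surj x
        have hc := hcomm g' ha0u.unit
        have heq : σ (g : Matrix (Fin r) (Fin r) F) (g' : Matrix (Fin r) (Fin r) F) =
            σ (g' : Matrix (Fin r) (Fin r) F) (g : Matrix (Fin r) (Fin r) F) := (hyp g').2
        have hgdiag : (g : Matrix (Fin r) (Fin r) F) =
            Matrix.diagonal fun _ => (ha0u.unit : F) := by
          rw [← ha0, Matrix.scalar_apply, ha0u.unit_spec]
        rw [hgdiag] at heq
        rw [← hg', ← hc, heq, mul_inv_cancel]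
    · rintro ⟨a, hga, b, hb⟩
      intro g'
      constructor
      · apply Units.ext
        rw [Units.val_mul, Units.val_mul, hga]
        have hsc := Matrix.scalar_commute (n := Fin r) (a : F) (fun r' => mul_comm _ r')
          (g' : Matrix (Fin r) (Fin r) F)
        rw [Matrix.scalar_apply] at hsc
        exact hsc
      · have h1 : ∀ x : Fˣ, h x (a ^ (r - 1 + 2 * c * r)) = 1 :=
          (hnondeg _).mpr ⟨b, hb⟩
        have hc := hcomm g' a
        rw [h1] at hc
        rw [hga]
        rw [mul_inv_eq_one] at hc
        exact hc.symm
  exact ⟨key, key.trans (exists_congr fun a => and_congr_right fun _ => hGO a)⟩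
end

section
/- The equivalence of the two descriptions of the center of the metaplectic cover: for a local field F containing μ_n and integers r ≥ 1, c, setting d = gcd(r-1+2c, n), an element a ∈ F^× satisfies a^{r-1+2cr} ∈ F^{×n} if and only if a ∈ F^{×(n/d)}. -/
/-!
By Bézout, `a ^ m ∈ F^{×n}` forces `a ^ d ∈ F^{×n}` with `d = gcd(m, n)`. Writing `n = d k`
and `a ^ d = c ^ n`, the quotient `a / c ^ k` is a `d`-th root of unity, and since `F`
contains a primitive `n`-th root of unity `ζ`, every `d`-th root of unity is a power of
`ζ ^ k`, hence a `k`-th power.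
-/

theorem exists_pow_gcd_eq_pow_of_pow_eq {G : Type*} [CommGroup G] {a b : G} {m n : ℕ}
    (h : a ^ m = b ^ n) : ∃ c : G, a ^ Nat.gcd m n = c ^ n := by
  refine ⟨b ^ Nat.gcdA m n * a ^ Nat.gcdB m n, ?_⟩
  rw [← zpow_natCast, Nat.gcd_eq_gcd_ab, zpow_add, zpow_mul, zpow_mul, zpow_natCast,
    zpow_natCast, h, ← zpow_natCast, ← zpow_natCast, ← zpow_mul, ← zpow_mul, mul_comm (n : ℤ),
    mul_comm (n : ℤ), zpow_mul, zpow_mul, ← mul_zpow, zpow_natCast]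

namespace IsPrimitiveRoot

variable {R : Type*} [CommRing R] [IsDomain R] {ζ : Rˣ} {n : ℕ}

theorem exists_pow_div_eq_of_pow_eq_one (hζ : IsPrimitiveRoot ζ n) (hn : n ≠ 0) {d : ℕ}
    (hd : d ∣ n) {x : Rˣ} (hx : x ^ d = 1) : ∃ y : Rˣ, x = y ^ (n / d) := by
  have : NeZero d := ⟨fun h ↦ hn (Nat.eq_zero_of_zero_dvd (h ▸ hd))⟩
  have hζd : IsPrimitiveRoot (ζ ^ (n / d)) d :=
    hζ.pow (Nat.pos_of_ne_zero hn) (Nat.div_mul_cancel hd).symm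
  obtain ⟨i, -, hi⟩ := hζd.eq_pow_of_mem_rootsOfUnity ((mem_rootsOfUnity d x).mpr hx)
  exact ⟨ζ ^ i, by rw [← hi, ← pow_mul, ← pow_mul, mul_comm]⟩

theorem exists_pow_eq_pow_iff (hζ : IsPrimitiveRoot ζ n) (hn : n ≠ 0) (m : ℕ) (a : Rˣ) :
    (∃ b : Rˣ, a ^ m = b ^ n) ↔ ∃ b : Rˣ, a = b ^ (n / Nat.gcd m n) := by
  set d := Nat.gcd m n
  set k := n / d
  have hk : n = d * k := (Nat.mul_div_cancel' (Nat.gcd_dvd_right m n)).symm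
  constructor
  · rintro ⟨b, hb⟩
    obtain ⟨c, hc⟩ := exists_pow_gcd_eq_pow_of_pow_eq hb
    have hroot : (a * (c ^ k)⁻¹) ^ d = 1 := by
      rw [mul_pow, hc, inv_pow, ← pow_mul, mul_comm k, ← hk, mul_inv_cancel]
    obtain ⟨y, hy⟩ := hζ.exists_pow_div_eq_of_pow_eq_one hn (Nat.gcd_dvd_right m n) hroot
    rw [mul_inv_eq_iff_eq_mul] at hy
    exact ⟨c * y, by rw [hy, mul_pow, mul_comm]⟩
  · rintro ⟨b, rfl⟩
    obtain ⟨l, hl⟩ : d ∣ m := Nat.gcd_dvd_left m n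
    refine ⟨b ^ l, ?_⟩
    rw [← pow_mul, ← pow_mul, hk, hl]
    congr 1; ring

end IsPrimitiveRoot

theorem local_field_power_condition_general
    (F : Type*) [Field F]
    (n : ℕ) (hn : 2 ≤ n) (hμ : ∃ ζ : Fˣ, orderOf ζ = n)
    (r c : ℕ) :
    ∀ a : Fˣ,
      (∃ b : Fˣ, a ^ (r - 1 + 2 * c * r) = b ^ n) ↔
      (∃ b b' : Fˣ, a = b ^ (n / Nat.gcd (r - 1 + 2 * c * r) n) * b' ^ n) := by
  intro a
  obtain ⟨ζ, hζ⟩ := hμ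
  have hprim : IsPrimitiveRoot ζ n := hζ ▸ IsPrimitiveRoot.orderOf ζ
  set d := Nat.gcd (r - 1 + 2 * c * r) n
  have hn_eq : d * (n / d) = n := Nat.mul_div_cancel' (Nat.gcd_dvd_right _ n)
  rw [hprim.exists_pow_eq_pow_iff (by omega)]
  constructor
  · rintro ⟨b, hb⟩
    exact ⟨b, 1, by rw [one_pow, mul_one, hb]⟩
  · rintro ⟨b, b', rfl⟩
    exact ⟨b * b' ^ d, by rw [mul_pow, ← pow_mul, hn_eq]⟩

/-- Let `F` be a local field of characteristic `0` (a locally compact non-discrete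
Hausdorff topological field of characteristic zero) containing the group `μ_n` of `n`-th
roots of unity.  Set `m = r - 1 + 2cr` and `d = gcd(m, n)`.  Then an element `a ∈ F^×`
satisfies `a^m ∈ F^{×n}` if and only if `a ∈ F^{×(n/d)} F^{×n}` (equivalently,
`a ∈ F^{×(n/d)}`): the two descriptions of the center of the metaplectic cover agree. -/
theorem local_field_power_condition
    (F : Type*) [Field F] [TopologicalSpace F] [IsTopologicalDivisionRing F]
    [LocallyCompactSpace F] [T2Space F] [CharZero F]
    (hnd : ¬ DiscreteTopology F)
    (n : ℕ) (hn : 2 ≤ n) (hμ : ∃ ζ : Fˣ, orderOf ζ = n)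
    (r c : ℕ) (hr : 1 ≤ r) :
    ∀ a : Fˣ,
      (∃ b : Fˣ, a ^ (r - 1 + 2 * c * r) = b ^ n) ↔
      (∃ b b' : Fˣ, a = b ^ (n / Nat.gcd (r - 1 + 2 * c * r) n) * b' ^ n) :=
  local_field_power_condition_general F n hn hμ r c
end
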